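/- arXiv:2602.18109 — 2 statements merged into one kernel-verified Lean document; each statement's English description precedes it below -/
import Mathlib

section
/- Let (S, dist) be a metric space, A a finite nonempty set, γ ∈ [0, 1), L_r ≥ 0, L_p ≥ 0, and Δ ≥ 0. Let r : S → A → ℝ satisfy |r(s, a) − r(s', a)| ≤ L_r · dist(s, s') for all s, s' ∈ S and a ∈ A. Let P assign to each (s, a) a probability measure P(s, a) on S, and suppose the transition kernel is TV-Lipschitz in the sense that for every a ∈ A, all s, s' ∈ S, and every bounded measurable g : S → ℝ, |∫ g dP(s, a) − ∫ g dP(s', a)| ≤ (sup_x |g(x)|) · L_p · dist(s, s'). Let w : A → ℝ≥0 be fixed action weights with Σ_a w(a) = 1, and let V : S → ℝ be a bounded measurable function satisfying the Bellman identity V(s) = Σ_a w(a) · (r(s, a) + γ · ∫ V dP(s, a)) for all s ∈ S. Then for all s, ŝ ∈ S with dist(s, ŝ) ≤ Δ, |V(s) − V(ŝ)| ≤ Δ · (L_r + γ · L_p · ‖V‖_∞), where ‖V‖_∞ = sup_s |V(s)|. -/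
open MeasureTheory

/-- Local value perturbation under discretization: for an MDP with `L_r`-Lipschitz rewards,
a TV-`L_p`-Lipschitz transition kernel, and a bounded measurable value function `V` of a
stationary randomized policy with action weights `w`, any two states at distance at most `Δ`
satisfy `|V s − V sh| ≤ Δ · (L_r + γ · L_p · ‖V‖_∞)`. -/
theorem local_value_perturbation
    {S A : Type*} [MetricSpace S] [MeasurableSpace S] [Fintype A] [Nonempty A]
    (γ : ℝ) (hγ0 : 0 ≤ γ) (hγ1 : γ < 1)
    (Lr Lp Δ : ℝ) (hLr : 0 ≤ Lr) (hLp : 0 ≤ Lp) (hΔ : 0 ≤ Δ)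
    (r : S → A → ℝ)
    (hr : ∀ (s s' : S) (a : A), |r s a - r s' a| ≤ Lr * dist s s')
    (P : S → A → Measure S)
    (hP : ∀ s a, IsProbabilityMeasure (P s a))
    (hPlip : ∀ (a : A) (s s' : S) (g : S → ℝ), Measurable g →
      BddAbove (Set.range fun x => |g x|) →
      |∫ x, g x ∂(P s a) - ∫ x, g x ∂(P s' a)| ≤ (⨆ x, |g x|) * Lp * dist s s')
    (w : A → ℝ) (hw0 : ∀ a, 0 ≤ w a) (hw1 : ∑ a, w a = 1)
    (V : S → ℝ) (hVmeas : Measurable V)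
    (hVbdd : BddAbove (Set.range fun s => |V s|))
    (hBellman : ∀ s : S, V s = ∑ a, w a * (r s a + γ * ∫ x, V x ∂(P s a))) :
    ∀ s sh : S, dist s sh ≤ Δ →
      |V s - V sh| ≤ Δ * (Lr + γ * Lp * ⨆ t, |V t|) := by
  intro s sh hd
  set M := ⨆ t, |V t| with hM
  have hM0 : 0 ≤ M := le_ciSup_of_le hVbdd s (abs_nonneg _)
  have key : V s - V sh = ∑ a, w a * ((r s a - r sh a)
      + γ * ((∫ x, V x ∂(P s a)) - ∫ x, V x ∂(P sh a))) := by
    rw [hBellman s, hBellman sh, ← Finset.sum_sub_distrib]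
    congr 1; ext a; ring
  rw [key]
  have hterm : ∀ a : A, |w a * ((r s a - r sh a)
      + γ * ((∫ x, V x ∂(P s a)) - ∫ x, V x ∂(P sh a)))|
      ≤ w a * (Δ * (Lr + γ * Lp * M)) := by
    intro a
    rw [abs_mul, abs_of_nonneg (hw0 a)]
    apply mul_le_mul_of_nonneg_left _ (hw0 a)
    calc |(r s a - r sh a) + γ * ((∫ x, V x ∂(P s a)) - ∫ x, V x ∂(P sh a))|
        ≤ |r s a - r sh a| + |γ * ((∫ x, V x ∂(P s a)) - ∫ x, V x ∂(P sh a))| :=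
          abs_add_le _ _
      _ ≤ Lr * dist s sh + γ * (M * Lp * dist s sh) := by
          gcongr
          · exact hr s sh a
          · rw [abs_mul, abs_of_nonneg hγ0]
            exact mul_le_mul_of_nonneg_left (hPlip a s sh V hVmeas hVbdd) hγ0
      _ ≤ Lr * Δ + γ * (M * Lp * Δ) := by gcongr <;> positivity
      _ = Δ * (Lr + γ * Lp * M) := by ring
  calc |∑ a, w a * ((r s a - r sh a)
      + γ * ((∫ x, V x ∂(P s a)) - ∫ x, V x ∂(P sh a)))|
      ≤ ∑ a, |w a * ((r s a - r sh a)
      + γ * ((∫ x, V x ∂(P s a)) - ∫ x, V x ∂(P sh a)))| := Finset.abs_sum_le_sum_abs _ _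
    _ ≤ ∑ a, w a * (Δ * (Lr + γ * Lp * M)) := Finset.sum_le_sum fun a _ => hterm a
    _ = Δ * (Lr + γ * Lp * M) := by rw [← Finset.sum_mul, hw1, one_mul]
end

section
/- Let (S, dist) be a finite nonempty metric space and A a finite nonempty set; let γ ∈ [0, 1), R_max ≥ 0, L_r ≥ 0, L_p ≥ 0, Δ ≥ 0. Let r : S → A → ℝ satisfy |r(s, a)| ≤ R_max and |r(s, a) − r(t, a)| ≤ L_r · dist(s, t) for all s, t, a. Let p : S → A → S → ℝ be row-stochastic and satisfy Σ_{s'} |p(s, a, s') − p(t, a, s')| ≤ L_p · dist(s, t) for all s, t, a. Let φ : S → S be a quantization map with dist(s, φ(s)) ≤ Δ for all s. Let T be the Bellman optimality operator (T f)(s) = max_{a} (r(s, a) + γ · Σ_{s'} p(s, a, s') · f(s')), and let T̃ be the quantized operator (T̃ f)(s) = (T f)(φ(s)). If V* is a fixed point of T and Ṽ* is a fixed point of T̃, then max_{s ∈ S} |V*(s) − Ṽ*(s)| ≤ (Δ / (1 − γ)) · (L_r + γ · L_p · R_max / (1 − γ)). -/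
/-!
With `‖·‖` the sup norm on `S → ℝ`, write `V*(s) - Ṽ*(s) = (T V*)(s) - (T Ṽ*)(φ s)` and split at
`(T V*)(φ s)`. The Bellman operator is Lipschitz in the state, with constant
`L_r + γ L_p ‖f‖` on `f`, and `‖V*‖ ≤ R_max / (1 - γ)` because `‖T f‖ ≤ R_max + γ ‖f‖`; so the
first piece is at most `(L_r + γ L_p R_max / (1 - γ)) Δ`. The second is at most
`γ ‖V* - Ṽ*‖` since `T` is a `γ`-contraction, and solving
`‖V* - Ṽ*‖ ≤ (L_r + γ L_p R_max / (1 - γ)) Δ + γ ‖V* - Ṽ*‖` gives the bound.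
-/

open Finset

lemma ciSup_le_ciSup_add {A : Type*} [Finite A] [Nonempty A] {f g : A → ℝ} {c : ℝ}
    (h : ∀ a, f a ≤ g a + c) : ⨆ a, f a ≤ (⨆ a, g a) + c :=
  ciSup_le fun a => (h a).trans <| add_le_add_left (le_ciSup (Set.finite_range g).bddAbove a) c

lemma abs_ciSup_sub_ciSup_le {A : Type*} [Finite A] [Nonempty A] {f g : A → ℝ} {c : ℝ}
    (h : ∀ a, |f a - g a| ≤ c) : |(⨆ a, f a) - ⨆ a, g a| ≤ c := by
  rw [abs_sub_le_iff, sub_le_iff_le_add', sub_le_iff_le_add']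
  refine ⟨ciSup_le_ciSup_add fun a => ?_, ciSup_le_ciSup_add fun a => ?_⟩
  · linarith [(abs_le.mp (h a)).2]
  · linarith [(abs_le.mp (h a)).1]

lemma abs_ciSup_le {A : Type*} [Finite A] [Nonempty A] {f : A → ℝ} {c : ℝ}
    (h : ∀ a, |f a| ≤ c) : |⨆ a, f a| ≤ c := by
  simpa only [ciSup_const, sub_zero] using
    abs_ciSup_sub_ciSup_le (g := fun _ : A => (0 : ℝ)) (by simpa only [sub_zero] using h)

lemma abs_sum_mul_le_sum_abs_mul_norm {S : Type*} [Fintype S] (w f : S → ℝ) :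
    |∑ s, w s * f s| ≤ (∑ s, |w s|) * ‖f‖ :=
  calc |∑ s, w s * f s| ≤ ∑ s, |w s| * |f s| := by
        simpa only [abs_mul] using abs_sum_le_sum_abs (fun s => w s * f s) univ
    _ ≤ ∑ s, |w s| * ‖f‖ := by
        gcongr with s
        exact norm_le_pi_norm f s
    _ = (∑ s, |w s|) * ‖f‖ := (sum_mul ..).symm

lemma abs_sum_mul_le_norm_of_stochastic {S : Type*} [Fintype S] {w : S → ℝ}
    (hw0 : ∀ s, 0 ≤ w s) (hw1 : ∑ s, w s = 1) (f : S → ℝ) : |∑ s, w s * f s| ≤ ‖f‖ := by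
  simpa only [abs_of_nonneg (hw0 _), hw1, one_mul] using abs_sum_mul_le_sum_abs_mul_norm w f

lemma le_div_one_sub_of_le_add_mul {x c γ : ℝ} (hγ : γ < 1) (h : x ≤ c + γ * x) :
    x ≤ c / (1 - γ) := by
  rw [le_div_iff₀ (sub_pos.mpr hγ)]
  linarith

namespace MDP

variable {S A : Type*} [Fintype S] (r : S → A → ℝ) (p : S → A → S → ℝ) (γ : ℝ)

noncomputable def qValue (f : S → ℝ) (s : S) (a : A) : ℝ :=
  r s a + γ * ∑ s', p s a s' * f s'

noncomputable def bellmanOpt (f : S → ℝ) (s : S) : ℝ :=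
  ⨆ a, qValue r p γ f s a

variable {r p γ} [Finite A] [Nonempty A]

lemma abs_bellmanOpt_sub_le (hγ0 : 0 ≤ γ) (hp0 : ∀ s a s', 0 ≤ p s a s')
    (hp1 : ∀ s a, ∑ s', p s a s' = 1) (f g : S → ℝ) (s : S) :
    |bellmanOpt r p γ f s - bellmanOpt r p γ g s| ≤ γ * ‖f - g‖ := by
  refine abs_ciSup_sub_ciSup_le fun a => ?_
  have hdiff : qValue r p γ f s a - qValue r p γ g s a = γ * ∑ s', p s a s' * (f - g) s' := by
    simp only [qValue, Pi.sub_apply, mul_sub, sum_sub_distrib]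
    ring
  rw [hdiff, abs_mul, abs_of_nonneg hγ0]
  gcongr
  exact abs_sum_mul_le_norm_of_stochastic (hp0 s a) (hp1 s a) (f - g)

lemma abs_bellmanOpt_le {Rmax : ℝ} (hγ0 : 0 ≤ γ) (hrB : ∀ s a, |r s a| ≤ Rmax)
    (hp0 : ∀ s a s', 0 ≤ p s a s') (hp1 : ∀ s a, ∑ s', p s a s' = 1) (f : S → ℝ) (s : S) :
    |bellmanOpt r p γ f s| ≤ Rmax + γ * ‖f‖ := by
  refine abs_ciSup_le fun a => (abs_add_le _ _).trans ?_
  rw [abs_mul, abs_of_nonneg hγ0]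
  gcongr
  · exact hrB s a
  · exact abs_sum_mul_le_norm_of_stochastic (hp0 s a) (hp1 s a) f

lemma norm_le_of_bellmanOpt_eq [Nonempty S] {Rmax : ℝ} (hγ0 : 0 ≤ γ) (hγ1 : γ < 1)
    (hrB : ∀ s a, |r s a| ≤ Rmax) (hp0 : ∀ s a s', 0 ≤ p s a s')
    (hp1 : ∀ s a, ∑ s', p s a s' = 1) {V : S → ℝ} (hV : bellmanOpt r p γ V = V) :
    ‖V‖ ≤ Rmax / (1 - γ) := by
  refine le_div_one_sub_of_le_add_mul hγ1 ((pi_norm_le_iff_of_nonempty _).mpr fun s => ?_)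
  simpa only [hV, Real.norm_eq_abs] using abs_bellmanOpt_le hγ0 hrB hp0 hp1 V s

lemma abs_bellmanOpt_sub_bellmanOpt_le_dist [PseudoMetricSpace S] {Lr Lp : ℝ} (hγ0 : 0 ≤ γ)
    (hrL : ∀ s t a, |r s a - r t a| ≤ Lr * dist s t)
    (hpL : ∀ s t a, (∑ s', |p s a s' - p t a s'|) ≤ Lp * dist s t) (f : S → ℝ) (s t : S) :
    |bellmanOpt r p γ f s - bellmanOpt r p γ f t| ≤ (Lr + γ * Lp * ‖f‖) * dist s t := by
  refine abs_ciSup_sub_ciSup_le fun a => ?_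
  have hdiff : qValue r p γ f s a - qValue r p γ f t a
      = (r s a - r t a) + γ * ∑ s', (p s a s' - p t a s') * f s' := by
    simp only [qValue, sub_mul, sum_sub_distrib]
    ring
  have hexp : |∑ s', (p s a s' - p t a s') * f s'| ≤ Lp * dist s t * ‖f‖ :=
    (abs_sum_mul_le_sum_abs_mul_norm _ f).trans <|
      mul_le_mul_of_nonneg_right (hpL s t a) (norm_nonneg f)
  calc |qValue r p γ f s a - qValue r p γ f t a|
      = |(r s a - r t a) + γ * ∑ s', (p s a s' - p t a s') * f s'| := by rw [hdiff]
    _ ≤ |r s a - r t a| + γ * |∑ s', (p s a s' - p t a s') * f s'| := by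
        rw [← abs_of_nonneg hγ0, ← abs_mul, abs_of_nonneg hγ0]
        exact abs_add_le _ _
    _ ≤ Lr * dist s t + γ * (Lp * dist s t * ‖f‖) := by gcongr; exact hrL s t a
    _ = (Lr + γ * Lp * ‖f‖) * dist s t := by ring

end MDP

theorem quantized_optimal_value_gap_general
    {S A : Type*} [MetricSpace S] [Fintype S] [Nonempty S] [Fintype A] [Nonempty A]
    (γ : ℝ) (hγ0 : 0 ≤ γ) (hγ1 : γ < 1)
    (Rmax Lr Lp Δ : ℝ) (hLr : 0 ≤ Lr) (hLp : 0 ≤ Lp)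
    (r : S → A → ℝ)
    (hrB : ∀ s a, |r s a| ≤ Rmax)
    (hrL : ∀ s t a, |r s a - r t a| ≤ Lr * dist s t)
    (p : S → A → S → ℝ)
    (hp0 : ∀ s a s', 0 ≤ p s a s') (hp1 : ∀ s a, ∑ s', p s a s' = 1)
    (hpL : ∀ s t a, (∑ s', |p s a s' - p t a s'|) ≤ Lp * dist s t)
    (φ : S → S) (hφ : ∀ s, dist s (φ s) ≤ Δ)
    (T : (S → ℝ) → S → ℝ)
    (hT : ∀ f s, T f s = ⨆ a : A, (r s a + γ * ∑ s', p s a s' * f s'))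
    (Vstar Vtilde : S → ℝ)
    (hVstar : ∀ s, T Vstar s = Vstar s)
    (hVtilde : ∀ s, T Vtilde (φ s) = Vtilde s) :
    (⨆ s : S, |Vstar s - Vtilde s|) ≤ (Δ / (1 - γ)) * (Lr + γ * Lp * Rmax / (1 - γ)) := by
  obtain rfl : T = MDP.bellmanOpt r p γ := funext fun f => funext (hT f)
  have hnorm : ‖Vstar‖ ≤ Rmax / (1 - γ) :=
    MDP.norm_le_of_bellmanOpt_eq hγ0 hγ1 hrB hp0 hp1 (funext hVstar)
  have hcoef : Lr + γ * Lp * ‖Vstar‖ ≤ Lr + γ * Lp * (Rmax / (1 - γ)) := by gcongr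
  set C := Lr + γ * Lp * (Rmax / (1 - γ))
  have hC : 0 ≤ C := by have := (norm_nonneg Vstar).trans hnorm; positivity
  have hstep : ∀ s, ‖(Vstar - Vtilde) s‖ ≤ C * Δ + γ * ‖Vstar - Vtilde‖ := fun s =>
    calc |Vstar s - Vtilde s|
        = |MDP.bellmanOpt r p γ Vstar s - MDP.bellmanOpt r p γ Vtilde (φ s)| := by
          rw [hVstar, hVtilde]
      _ ≤ |MDP.bellmanOpt r p γ Vstar s - MDP.bellmanOpt r p γ Vstar (φ s)|
          + |MDP.bellmanOpt r p γ Vstar (φ s) - MDP.bellmanOpt r p γ Vtilde (φ s)| :=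
          abs_sub_le _ _ _
      _ ≤ (Lr + γ * Lp * ‖Vstar‖) * dist s (φ s) + γ * ‖Vstar - Vtilde‖ :=
          add_le_add (MDP.abs_bellmanOpt_sub_bellmanOpt_le_dist hγ0 hrL hpL Vstar s (φ s))
            (MDP.abs_bellmanOpt_sub_le hγ0 hp0 hp1 Vstar Vtilde (φ s))
      _ ≤ C * Δ + γ * ‖Vstar - Vtilde‖ := by gcongr; exact hφ s
  calc (⨆ s, |Vstar s - Vtilde s|) ≤ ‖Vstar - Vtilde‖ :=
        ciSup_le fun s => norm_le_pi_norm (Vstar - Vtilde) s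
    _ ≤ C * Δ / (1 - γ) :=
        le_div_one_sub_of_le_add_mul hγ1 ((pi_norm_le_iff_of_nonempty _).mpr hstep)
    _ = Δ / (1 - γ) * (Lr + γ * Lp * Rmax / (1 - γ)) := by ring

/-- Global abstraction error in optimal values: for a finite MDP with `L_r`-Lipschitz
bounded rewards, a TV-`L_p`-Lipschitz transition kernel (ℓ¹ condition on rows), and a
quantization map `φ` moving states by at most `Δ`, the fixed points `V*` of the Bellman
optimality operator `T` and `Ṽ*` of the quantized operator `T̃ f = (T f) ∘ φ` satisfy
`max_s |V*(s) − Ṽ*(s)| ≤ (Δ/(1−γ)) · (L_r + γ·L_p·R_max/(1−γ))`. -/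
theorem quantized_optimal_value_gap
    {S A : Type*} [MetricSpace S] [Fintype S] [Nonempty S] [Fintype A] [Nonempty A]
    (γ : ℝ) (hγ0 : 0 ≤ γ) (hγ1 : γ < 1)
    (Rmax Lr Lp Δ : ℝ) (hRmax : 0 ≤ Rmax) (hLr : 0 ≤ Lr) (hLp : 0 ≤ Lp) (hΔ : 0 ≤ Δ)
    (r : S → A → ℝ)
    (hrB : ∀ s a, |r s a| ≤ Rmax)
    (hrL : ∀ s t a, |r s a - r t a| ≤ Lr * dist s t)
    (p : S → A → S → ℝ)
    (hp0 : ∀ s a s', 0 ≤ p s a s') (hp1 : ∀ s a, ∑ s', p s a s' = 1)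
    (hpL : ∀ s t a, (∑ s', |p s a s' - p t a s'|) ≤ Lp * dist s t)
    (φ : S → S) (hφ : ∀ s, dist s (φ s) ≤ Δ)
    (T : (S → ℝ) → S → ℝ)
    (hT : ∀ f s, T f s = ⨆ a : A, (r s a + γ * ∑ s', p s a s' * f s'))
    (Vstar Vtilde : S → ℝ)
    (hVstar : ∀ s, T Vstar s = Vstar s)
    (hVtilde : ∀ s, T Vtilde (φ s) = Vtilde s) :
    (⨆ s : S, |Vstar s - Vtilde s|) ≤ (Δ / (1 - γ)) * (Lr + γ * Lp * Rmax / (1 - γ)) :=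
  quantized_optimal_value_gap_general γ hγ0 hγ1 Rmax Lr Lp Δ hLr hLp r hrB hrL p hp0 hp1 hpL φ hφ T
    hT Vstar Vtilde hVstar hVtilde
end
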